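/- arXiv:0907.4789 — 4 statements merged into one kernel-verified Lean document; each statement's English description precedes it below -/
import Mathlib

section
/- Define q_m(t) = (mt − (m+1))((m+1)t − m) for positive integers m. If m ≠ n are positive integers, then q_m and q_n are strongly coprime: for all nonzero integers j, k, the polynomials q_m(t^j) and q_n(t^k) are coprime in ℚ[t, t⁻¹]; equivalently, there are no nonzero complex roots r_m of q_m and r_n of q_n and nonzero integers k, j with r_m^k = r_n^j. -/
open Polynomial

/-- The polynomial `q_m(t) = (mt − (m+1))((m+1)t − m)`. -/
noncomputable def qpoly (m : ℕ) : Polynomial ℚ :=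
  (C (m : ℚ) * X - C ((m : ℚ) + 1)) * (C ((m : ℚ) + 1) * X - C (m : ℚ))

/-- View a Laurent polynomial over `ℚ` as a finitely supported function `ℤ →₀ ℚ`. -/
def toF (p : LaurentPolynomial ℚ) : ℤ →₀ ℚ := p.coeff

/-- The substitution `t ↦ t^j` on Laurent polynomials over `ℚ`. -/
noncomputable def substPow (j : ℤ) (p : LaurentPolynomial ℚ) : LaurentPolynomial ℚ :=
  AddMonoidAlgebra.ofCoeff (Finsupp.mapDomain (fun i => j * i) (toF p))

/-!
The roots of `q_m` are `x_m = (m+1)/m` and `x_m⁻¹`, so a coincidence `r_m^k = r_n^j` of powers of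
roots amounts to `x_m^a = x_n^b` with `a, b` nonzero integers, which can be taken positive since
`x_m, x_n > 1`. Both sides are in lowest terms, so their denominators agree: `m^a = n^b`. If
`m < n`, this forces `b < a`, while `x_m > x_n > 1` forces `a < b`.

For coprimality, `q_m` is palindromic, so `q_m(t^{-J})` is a unit multiple of `q_m(t^J)` in
`ℚ[t,t⁻¹]`; this reduces the claim to coprimality of `q_m(t^J)` and `q_n(t^K)` in `ℚ[t]`, i.e. to
the absence of a common complex root `r`, which would give the coincidence `(r^J)^K = (r^K)^J`.
-/

lemma pow_lt_pow_of_lt_of_le {R : Type*} [Semiring R] [LinearOrder R] [IsStrictOrderedRing R]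
    {x y : R} {a b : ℕ} (hy : 0 ≤ y) (hyx : y < x) (hx : 1 ≤ x) (hb : b ≠ 0) (hba : b ≤ a) :
    y ^ b < x ^ a :=
  (pow_lt_pow_left₀ hyx hy hb).trans_le (pow_le_pow_right₀ hx hba)

lemma one_lt_succ_div_self {m : ℕ} (hm : 0 < m) : 1 < (m + 1 : ℚ) / m := by
  rw [one_lt_div (by exact_mod_cast hm)]; linarith

lemma succ_div_self_pow_ne {m n : ℕ} (hm : 0 < m) (hmn : m < n) {a b : ℕ} (ha : a ≠ 0)
    (hb : b ≠ 0) : ((m + 1 : ℚ) / m) ^ a ≠ ((n + 1 : ℚ) / n) ^ b := by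
  intro h
  have hcop (k e : ℕ) : Nat.Coprime (((k + 1) ^ e : ℕ) : ℤ).natAbs (((k ^ e : ℕ) : ℤ)).natAbs := by
    simpa only [Int.natAbs_natCast] using
      (Nat.coprime_self_add_left.mpr (Nat.coprime_one_left k)).pow e e
  obtain ⟨-, hden⟩ := Rat.div_int_inj (by exact_mod_cast pow_pos hm a)
    (by exact_mod_cast pow_pos (hm.trans hmn) b) (hcop m a) (hcop n b)
    (by push_cast; rwa [← div_pow, ← div_pow])
  have hab : b < a := by
    by_contra! hab
    exact (pow_lt_pow_of_lt_of_le (Nat.zero_le m) hmn (by omega) ha hab).ne (by exact_mod_cast hden)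
  have hnm : (n + 1 : ℚ) / n < (m + 1) / m := by
    rw [div_lt_div_iff₀ (by exact_mod_cast hm.trans hmn) (by exact_mod_cast hm)]
    nlinarith [(Nat.cast_lt (α := ℚ)).mpr hmn]
  exact (pow_lt_pow_of_lt_of_le (by positivity) hnm (one_lt_succ_div_self hm).le hb hab.le).ne' h

lemma natAbs_pow_eq_of_zpow_eq {K : Type*} [Field K] [LinearOrder K] [IsStrictOrderedRing K]
    {x y : K} (hx : 1 < x) (hy : 1 < y) {a b : ℤ} (h : x ^ a = y ^ b) :
    x ^ a.natAbs = y ^ b.natAbs := by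
  rcases le_or_gt 0 a with ha | ha
  · have hb : 0 ≤ b := by rw [← one_le_zpow_iff_right₀ hy, ← h]; exact one_le_zpow₀ hx.le ha
    rw [← zpow_natCast, ← zpow_natCast, Int.natCast_natAbs, Int.natCast_natAbs, abs_of_nonneg ha,
      abs_of_nonneg hb, h]
  · have hb : b < 0 := by rw [← zpow_lt_one_iff_right₀ hy, ← h]; exact zpow_lt_one_of_neg₀ hx ha
    rw [← zpow_natCast, ← zpow_natCast, Int.natCast_natAbs, Int.natCast_natAbs, abs_of_neg ha,
      abs_of_neg hb, zpow_neg, zpow_neg, h]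

lemma succ_div_self_zpow_ne {m n : ℕ} (hm : 0 < m) (hn : 0 < n) (hmn : m ≠ n) {a b : ℤ}
    (ha : a ≠ 0) (hb : b ≠ 0) : ((m + 1 : ℚ) / m) ^ a ≠ ((n + 1 : ℚ) / n) ^ b := by
  intro h
  have h' := natAbs_pow_eq_of_zpow_eq (one_lt_succ_div_self hm) (one_lt_succ_div_self hn) h
  rcases hmn.lt_or_gt with hlt | hgt
  · exact succ_div_self_pow_ne hm hlt (by omega) (by omega) h'
  · exact succ_div_self_pow_ne hn hgt (by omega) (by omega) h'.symm

lemma eq_or_eq_inv_of_aeval_qpoly_eq_zero {K : Type*} [Field K] [Algebra ℚ K] {m : ℕ}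
    (hm : 0 < m) {r : K} (hr : aeval r (qpoly m) = 0) :
    r = algebraMap ℚ K ((m + 1) / m) ∨ r = (algebraMap ℚ K ((m + 1) / m))⁻¹ := by
  have : CharZero K := charZero_of_injective_ringHom (algebraMap ℚ K).injective
  have hm0 : (m : K) ≠ 0 := by exact_mod_cast hm.ne'
  have hm1 : (m + 1 : K) ≠ 0 := by exact_mod_cast m.succ_ne_zero
  simp only [qpoly, map_mul, map_sub, aeval_X, map_add, map_natCast, map_one, mul_eq_zero,
    map_div₀, inv_div] at hr ⊢
  rcases hr with h | h
  · left; field_simp; linear_combination h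
  · right; field_simp; linear_combination h

lemma exists_zpow_eq_of_aeval_qpoly_eq_zero {K : Type*} [Field K] [Algebra ℚ K] {m : ℕ}
    (hm : 0 < m) {r : K} (hr : aeval r (qpoly m) = 0) (k : ℤ) :
    ∃ a : ℤ, a.natAbs = k.natAbs ∧ r ^ k = algebraMap ℚ K (((m + 1) / m) ^ a) := by
  rcases eq_or_eq_inv_of_aeval_qpoly_eq_zero hm hr with rfl | rfl
  · exact ⟨k, rfl, (map_zpow₀ _ _ _).symm⟩
  · exact ⟨-k, Int.natAbs_neg k, by rw [map_zpow₀, zpow_neg, inv_zpow]⟩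

open LaurentPolynomial in
lemma substPow_toLaurent (j : ℤ) (p : ℚ[X]) : substPow j p.toLaurent = aeval (T j) p := by
  induction p using Polynomial.induction_on' with
  | add p q hp hq =>
    rw [map_add, map_add, ← hp, ← hq]
    exact congrArg AddMonoidAlgebra.ofCoeff (Finsupp.mapDomain_add ..)
  | monomial n a =>
    rw [toLaurent_C_mul_T, ← single_eq_C_mul_T]
    show AddMonoidAlgebra.ofCoeff (Finsupp.mapDomain _ (Finsupp.single (n : ℤ) a)) = _
    rw [Finsupp.mapDomain_single, AddMonoidAlgebra.ofCoeff_single, aeval_monomial, T_pow,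
      single_eq_C_mul_T, mul_comm (n : ℤ) j, ← LaurentPolynomial.C_eq_algebraMap]

open LaurentPolynomial in
lemma toLaurent_comp_X_pow {R : Type*} [CommSemiring R] (p : R[X]) (n : ℕ) :
    toLaurent (p.comp (X ^ n)) = aeval (T n : R[T;T⁻¹]) p := by
  rw [comp_eq_aeval, ← toLaurentAlg_apply, ← aeval_algHom_apply, toLaurentAlg_apply, map_pow,
    toLaurent_X, T_pow, mul_one]

open LaurentPolynomial in
lemma aeval_T_neg_qpoly (m : ℕ) (j : ℤ) :
    aeval (T (-j) : ℚ[T;T⁻¹]) (qpoly m) = T (-(2 * j)) * aeval (T j) (qpoly m) := by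
  have hT : (T (-j) : ℚ[T;T⁻¹]) * T j = 1 := by rw [← T_add, neg_add_cancel, T_zero]
  have hT2 : (T (-(2 * j)) : ℚ[T;T⁻¹]) = T (-j) * T (-j) := by rw [← T_add]; ring_nf
  simp only [qpoly, map_mul, map_sub, aeval_X, aeval_C, hT2]
  set c := algebraMap ℚ ℚ[T;T⁻¹] m
  set d := algebraMap ℚ ℚ[T;T⁻¹] (m + 1)
  linear_combination ((c ^ 2 + d ^ 2) * T (-j) - c * d * (T (-j) * T j + 1)) * hT

open LaurentPolynomial in
lemma exists_isUnit_substPow_qpoly_eq (m : ℕ) (j : ℤ) :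
    ∃ u : ℚ[T;T⁻¹], IsUnit u ∧
      substPow j (qpoly m).toLaurent = u * toLaurent ((qpoly m).comp (X ^ j.natAbs)) := by
  rw [substPow_toLaurent, toLaurent_comp_X_pow]
  rcases Int.natAbs_eq j with h | h
  · exact ⟨1, isUnit_one, by rw [one_mul, ← h]⟩
  · refine ⟨T (-(2 * j.natAbs)), isUnit_T _, ?_⟩
    conv_lhs => rw [h, aeval_T_neg_qpoly]

lemma zpow_ne_zpow_of_aeval_qpoly_eq_zero {K : Type*} [Field K] [Algebra ℚ K] {m n : ℕ}
    (hm : 0 < m) (hn : 0 < n) (hmn : m ≠ n) {rm rn : K} (hrm : aeval rm (qpoly m) = 0)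
    (hrn : aeval rn (qpoly n) = 0) {k j : ℤ} (hk : k ≠ 0) (hj : j ≠ 0) : rm ^ k ≠ rn ^ j := by
  obtain ⟨a, ha, hrma⟩ := exists_zpow_eq_of_aeval_qpoly_eq_zero hm hrm k
  obtain ⟨b, hb, hrnb⟩ := exists_zpow_eq_of_aeval_qpoly_eq_zero hn hrn j
  rw [hrma, hrnb, (algebraMap ℚ K).injective.ne_iff]
  exact succ_div_self_zpow_ne hm hn hmn (by omega) (by omega)

lemma isCoprime_qpoly_comp_X_pow {m n : ℕ} (hm : 0 < m) (hn : 0 < n) (hmn : m ≠ n) {J K : ℕ}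
    (hJ : J ≠ 0) (hK : K ≠ 0) : IsCoprime ((qpoly m).comp (X ^ J)) ((qpoly n).comp (X ^ K)) := by
  rw [isCoprime_iff_aeval_ne_zero_of_isAlgClosed ℚ ℂ]
  intro r
  by_contra! h
  simp only [aeval_comp, map_pow, aeval_X] at h
  refine zpow_ne_zpow_of_aeval_qpoly_eq_zero hm hn hmn h.1 h.2 (k := K) (j := J)
    (by exact_mod_cast hK) (by exact_mod_cast hJ) ?_
  rw [zpow_natCast, zpow_natCast, ← pow_mul, ← pow_mul, mul_comm]

/-- If `m ≠ n` are positive integers then `q_m` and `q_n` are strongly coprime: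
for all nonzero integers `j, k`, `q_m(t^j)` and `q_n(t^k)` are coprime in `ℚ[t,t⁻¹]`;
equivalently, no nonzero complex roots `r_m` of `q_m`, `r_n` of `q_n` satisfy
`r_m^k = r_n^j` for nonzero integers `k, j`. -/
theorem stmt3 (m n : ℕ) (hm : 0 < m) (hn : 0 < n) (hmn : m ≠ n) :
    (∀ j k : ℤ, j ≠ 0 → k ≠ 0 →
        IsCoprime (substPow j ((qpoly m).toLaurent)) (substPow k ((qpoly n).toLaurent))) ∧
      ¬ ∃ (rm rn : ℂ) (k j : ℤ), rm ≠ 0 ∧ rn ≠ 0 ∧ k ≠ 0 ∧ j ≠ 0 ∧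
          aeval rm (qpoly m) = 0 ∧ aeval rn (qpoly n) = 0 ∧ rm ^ k = rn ^ j := by
  refine ⟨fun j k hj hk => ?_, fun ⟨_, _, _, _, _, _, hk, hj, hrm, hrn, h⟩ =>
    zpow_ne_zpow_of_aeval_qpoly_eq_zero hm hn hmn hrm hrn hk hj h⟩
  obtain ⟨u, hu, hmj⟩ := exists_isUnit_substPow_qpoly_eq m j
  obtain ⟨v, hv, hnk⟩ := exists_isUnit_substPow_qpoly_eq n k
  rw [hmj, hnk, isCoprime_mul_unit_left_left hu, isCoprime_mul_unit_left_right hv]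
  exact (isCoprime_qpoly_comp_X_pow hm hn hmn (Int.natAbs_ne_zero.mpr hj)
    (Int.natAbs_ne_zero.mpr hk)).map toLaurent
end

section
/- Let m be a positive integer and M the 2×2 matrix with rows (m²+1, m) and (m, m²), acting on ℚ². For every integer k (positive, zero, or negative, where negative powers use M⁻¹ over ℚ since det M = m⁴ is nonzero), there is no pair of nonzero rationals (x₀, y₀) with M^k (0, y₀)ᵀ = (x₀, 0)ᵀ. -/
/-- The matrix `M = [[m²+1, m],[m, m²]]` over `ℚ`. -/
def Mmat (m : ℕ) : Matrix (Fin 2) (Fin 2) ℚ :=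
  !![(m : ℚ) ^ 2 + 1, (m : ℚ); (m : ℚ), (m : ℚ) ^ 2]

lemma Mmat_mulVec (m : ℕ) (v : Fin 2 → ℚ) :
    (Mmat m).mulVec v = ![((m : ℚ) ^ 2 + 1) * v 0 + m * v 1,
      (m : ℚ) * v 0 + (m : ℚ) ^ 2 * v 1] := by
  funext i
  fin_cases i <;>
    simp [Mmat, Matrix.mulVec, dotProduct, Fin.sum_univ_two]

lemma Mmat_pos (m : ℕ) (hm : 0 < m) : ∀ n : ℕ, 1 ≤ n → ∀ v : Fin 2 → ℚ,
    0 ≤ v 0 → 0 ≤ v 1 → (0 < v 0 ∨ 0 < v 1) →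
    0 < ((Mmat m ^ n).mulVec v) 0 ∧ 0 < ((Mmat m ^ n).mulVec v) 1 := by
  have hm' : (0 : ℚ) < m := by exact_mod_cast hm
  have key : ∀ v : Fin 2 → ℚ, 0 ≤ v 0 → 0 ≤ v 1 → (0 < v 0 ∨ 0 < v 1) →
      0 < ((Mmat m).mulVec v) 0 ∧ 0 < ((Mmat m).mulVec v) 1 := by
    intro v h0 h1 h
    rw [Mmat_mulVec]
    constructor <;> simp only [Matrix.cons_val_zero, Matrix.cons_val_one, Matrix.head_cons] <;>
      rcases h with h | h <;> nlinarith [mul_nonneg hm'.le h0, mul_nonneg hm'.le h1, mul_pos hm' h, mul_pos (mul_pos hm' hm') h, mul_nonneg (mul_nonneg hm'.le hm'.le) h0, mul_nonneg (mul_nonneg hm'.le hm'.le) h1]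
  intro n hn
  induction n with
  | zero => omega
  | succ n ih =>
    intro v h0 h1 h
    rcases Nat.eq_or_lt_of_le hn with hn1 | hn1
    · rw [← hn1] at *
      simpa using key v h0 h1 h
    · have hv := key v h0 h1 h
      have hn' : 1 ≤ n := by omega
      have := ih hn' ((Mmat m).mulVec v) hv.1.le hv.2.le (Or.inl hv.1)
      rw [Matrix.mulVec_mulVec, ← pow_succ] at this
      exact this

/-- For every integer `k` (negative powers via the inverse over `ℚ`, since `det M = m⁴ ≠ 0`),
there is no pair of nonzero rationals `(x₀, y₀)` with `M^k (0, y₀)ᵀ = (x₀, 0)ᵀ`. -/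
theorem stmt6 (m : ℕ) (hm : 0 < m) (k : ℤ) :
    ¬ ∃ x₀ y₀ : ℚ, x₀ ≠ 0 ∧ y₀ ≠ 0 ∧ (Mmat m ^ k).mulVec ![0, y₀] = ![x₀, 0] := by
  have hm' : (0 : ℚ) < m := by exact_mod_cast hm
  have hdet : IsUnit (Mmat m).det := by
    simp only [Mmat, Matrix.det_fin_two_of]
    refine isUnit_iff_ne_zero.2 ?_
    nlinarith [mul_pos (mul_pos hm' hm') (mul_pos hm' hm')]
  rintro ⟨x₀, y₀, hx, hy, heq⟩
  rcases lt_trichotomy k 0 with hk | hk | hk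
  · -- negative k: (0, y₀) = M^(-k) (x₀, 0)
    set n : ℕ := (-k).toNat with hn
    have hkn : (n : ℤ) = -k := Int.toNat_of_nonneg (by omega)
    have hback : (Mmat m ^ n).mulVec ![x₀, 0] = ![0, y₀] := by
      have : (Mmat m ^ (n : ℤ)).mulVec ((Mmat m ^ k).mulVec ![0, y₀]) = ![0, y₀] := by
        rw [Matrix.mulVec_mulVec, ← Matrix.zpow_add hdet, hkn, neg_add_cancel, zpow_zero,
          Matrix.one_mulVec]
      rw [heq] at this
      rw [← zpow_natCast (Mmat m) n]
      exact this
    have hn1 : 1 ≤ n := by omega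
    rcases hx.lt_or_gt with hx' | hx'
    · have := Mmat_pos m hm n hn1 ![-x₀, 0] (by simpa using hx'.le) (by simp)
        (Or.inl (by simpa using hx'))
      rw [show (![(-x₀ : ℚ), 0] : Fin 2 → ℚ) = -![x₀, 0] by funext i; fin_cases i <;> simp,
        Matrix.mulVec_neg, hback] at this
      simpa using this.1
    · have := Mmat_pos m hm n hn1 ![x₀, 0] hx'.le (by simp) (Or.inl hx')
      rw [hback] at this
      simpa using this.1
  · rw [hk, zpow_zero, Matrix.one_mulVec] at heq
    exact hy (by simpa using congrFun heq 1)
  · set n : ℕ := k.toNat with hn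
    have hkn : (n : ℤ) = k := Int.toNat_of_nonneg (by omega)
    have hn1 : 1 ≤ n := by omega
    have heq' : (Mmat m ^ n).mulVec ![0, y₀] = ![x₀, 0] := by
      rw [← zpow_natCast (Mmat m) n, hkn]; exact heq
    rcases hy.lt_or_gt with hy' | hy'
    · have := Mmat_pos m hm n hn1 ![0, -y₀] (by simp) (by simpa using hy'.le)
        (Or.inr (by simpa using hy'))
      rw [show (![(0:ℚ), -y₀] : Fin 2 → ℚ) = -![0, y₀] by funext i; fin_cases i <;> simp,
        Matrix.mulVec_neg, heq'] at this
      simpa using this.2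
    · have := Mmat_pos m hm n hn1 ![0, y₀] (by simp) hy'.le (Or.inr hy')
      rw [heq'] at this
      simpa using this.2
end

section
/- Let F be a finitely generated free abelian group and p, q ∈ ℚ[t,t⁻¹] nonzero and strongly coprime. Then for any nontrivial elements a, b ∈ F, the elements p(a) and q(b) of the group algebra ℚF (a unique factorization domain, being a Laurent polynomial ring) are relatively prime. -/
/-- View a finitely supported function `F →₀ ℚ` as an element of the group algebra `ℚF`. -/
def ofFG {F : Type*} [AddCommGroup F] (f : F →₀ ℚ) : AddMonoidAlgebra ℚ F := AddMonoidAlgebra.ofCoeff f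

/-- The element `p(a)` of the group algebra `ℚF`: the image of the Laurent polynomial `p`
under `t ↦ a`. -/
noncomputable def substElt {F : Type*} [AddCommGroup F] (a : F) (p : LaurentPolynomial ℚ) :
    AddMonoidAlgebra ℚ F :=
  ofFG (Finsupp.mapDomain (fun z : ℤ => z • a) (toF p))

open AddMonoidAlgebra

instance Module.Free.uniqueSums_of_int {F : Type*} [AddCommGroup F] [Module.Free ℤ F] :
    UniqueSums F :=
  UniqueSums.of_injective_addHom (Module.Free.chooseBasis ℤ F).repr.toAddMonoidHom.toAddHom
    (Module.Free.chooseBasis ℤ F).repr.injective inferInstance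

namespace AddMonoidAlgebra

variable {R G : Type*} [Semiring R] [AddMonoid G]

theorem exists_add_eq_of_mem_support_coeff_mul {x y : R[G]} {h : G}
    (hh : h ∈ (x * y).coeff.support) :
    ∃ g₁ ∈ x.coeff.support, ∃ g₂ ∈ y.coeff.support, g₁ + g₂ = h := by
  classical
  simpa [Finset.mem_add] using support_coeff_mul_subset x y hh

theorem coeff_mul_eq_zero_of_lt (φ : G →+ ℤ) {x y : R[G]} {M₁ M₂ : ℤ}
    (hx : ∀ g ∈ x.coeff.support, φ g ≤ M₁) (hy : ∀ g ∈ y.coeff.support, φ g ≤ M₂) {h : G}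
    (hh : M₁ + M₂ < φ h) : (x * y).coeff h = 0 := by
  by_contra hne
  obtain ⟨g₁, hg₁, g₂, hg₂, rfl⟩ :=
    exists_add_eq_of_mem_support_coeff_mul (Finsupp.mem_support_iff.mpr hne)
  have := hx g₁ hg₁
  have := hy g₂ hg₂
  rw [map_add] at hh
  omega

/-- The top `φ`-degree parts of `x` and `y` multiply to the top `φ`-degree part of `x * y`,
which is nonzero as `R[G]` has no zero divisors. -/
theorem exists_mem_support_coeff_mul_map_eq_add [NoZeroDivisors R[G]] (φ : G →+ ℤ)
    {x y : R[G]} {g₁ g₂ : G} (hg₁ : g₁ ∈ x.coeff.support) (hg₂ : g₂ ∈ y.coeff.support)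
    (hx : ∀ g ∈ x.coeff.support, φ g ≤ φ g₁) (hy : ∀ g ∈ y.coeff.support, φ g ≤ φ g₂) :
    ∃ h ∈ (x * y).coeff.support, φ h = φ g₁ + φ g₂ := by
  classical
  set x₀ : R[G] := ofCoeff (x.coeff.filter (φ · = φ g₁))
  set x₁ : R[G] := ofCoeff (x.coeff.filter (¬ φ · = φ g₁))
  set y₀ : R[G] := ofCoeff (y.coeff.filter (φ · = φ g₂))
  set y₁ : R[G] := ofCoeff (y.coeff.filter (¬ φ · = φ g₂))
  have hx₀ : ∀ g ∈ x₀.coeff.support, φ g = φ g₁ := by simp [x₀, Finsupp.support_filter]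
  have hy₀ : ∀ g ∈ y₀.coeff.support, φ g = φ g₂ := by simp [y₀, Finsupp.support_filter]
  have hx₁ : ∀ g ∈ x₁.coeff.support, φ g ≤ φ g₁ - 1 := by
    simp only [x₁, Finsupp.support_filter, Finset.mem_filter]
    exact fun g hg => by have := hx g hg.1; omega
  have hy₁ : ∀ g ∈ y₁.coeff.support, φ g ≤ φ g₂ - 1 := by
    simp only [y₁, Finsupp.support_filter, Finset.mem_filter]
    exact fun g hg => by have := hy g hg.1; omega
  have hx₀_ne : x₀ ≠ 0 := by
    have : g₁ ∈ x₀.coeff.support := by simpa [x₀, Finsupp.support_filter] using hg₁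
    intro h0; simp [h0] at this
  have hy₀_ne : y₀ ≠ 0 := by
    have : g₂ ∈ y₀.coeff.support := by simpa [y₀, Finsupp.support_filter] using hg₂
    intro h0; simp [h0] at this
  obtain ⟨h, hh⟩ : (x₀ * y₀).coeff.support.Nonempty := by
    simpa using mul_ne_zero hx₀_ne hy₀_ne
  obtain ⟨k₁, hk₁, k₂, hk₂, rfl⟩ := exists_add_eq_of_mem_support_coeff_mul hh
  have hφ : φ (k₁ + k₂) = φ g₁ + φ g₂ := by rw [map_add, hx₀ k₁ hk₁, hy₀ k₂ hk₂]
  have hx_eq : x = x₀ + x₁ := by rw [← ofCoeff_add, Finsupp.filter_add_filter_not, ofCoeff_coeff]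
  have hy_eq : y = y₀ + y₁ := by rw [← ofCoeff_add, Finsupp.filter_add_filter_not, ofCoeff_coeff]
  have hxy : x * y = x₀ * y₀ + x₀ * y₁ + x₁ * y := by rw [← mul_add, ← hy_eq, ← add_mul, ← hx_eq]
  refine ⟨k₁ + k₂, ?_, hφ⟩
  have hx₀_le : ∀ g ∈ x₀.coeff.support, φ g ≤ φ g₁ := fun g hg => (hx₀ g hg).le
  rw [Finsupp.mem_support_iff] at hh ⊢
  rwa [hxy, coeff_add, coeff_add, Finsupp.add_apply, Finsupp.add_apply,
    coeff_mul_eq_zero_of_lt φ hx₀_le hy₁ (by omega), coeff_mul_eq_zero_of_lt φ hx₁ hy (by omega),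
    add_zero, add_zero]

theorem subsingleton_image_support_of_dvd [NoZeroDivisors R[G]] (φ : G →+ ℤ) {d x : R[G]}
    (hdx : d ∣ x) (hx : x ≠ 0) (hφx : (φ '' x.coeff.support).Subsingleton) :
    (φ '' d.coeff.support).Subsingleton := by
  obtain ⟨e, rfl⟩ := hdx
  have hd : d.coeff.support.Nonempty := by simpa using left_ne_zero_of_mul hx
  have he : e.coeff.support.Nonempty := by simpa using right_ne_zero_of_mul hx
  obtain ⟨g₁, hg₁, hmax_d⟩ := d.coeff.support.exists_max_image φ hd
  obtain ⟨k₁, hk₁, hmin_d⟩ := d.coeff.support.exists_min_image φ hd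
  obtain ⟨g₂, hg₂, hmax_e⟩ := e.coeff.support.exists_max_image φ he
  obtain ⟨k₂, hk₂, hmin_e⟩ := e.coeff.support.exists_min_image φ he
  obtain ⟨h, hh, hφh⟩ := exists_mem_support_coeff_mul_map_eq_add φ hg₁ hg₂ hmax_d hmax_e
  obtain ⟨h', hh', hφh'⟩ := exists_mem_support_coeff_mul_map_eq_add (-φ) hk₁ hk₂
    (fun g hg => neg_le_neg (hmin_d g hg)) (fun g hg => neg_le_neg (hmin_e g hg))
  have hhh' : φ h = φ h' := hφx (Set.mem_image_of_mem φ hh) (Set.mem_image_of_mem φ hh')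
  simp only [AddMonoidHom.neg_apply] at hφh'
  have := hmin_e g₂ hg₂
  -- `max_d φ + max_e φ = min_d φ + min_e φ` forces `max_d φ = min_d φ`
  rintro _ ⟨g, hg, rfl⟩ _ ⟨g', hg', rfl⟩
  have := hmax_d g hg
  have := hmax_d g' hg'
  have := hmin_d g hg
  have := hmin_d g' hg'
  omega

theorem card_support_eq_one_of_isUnit {R : Type*} [Semiring R] [Nontrivial R]
    [NoZeroDivisors R[ℤ]] {x : R[ℤ]} (hx : IsUnit x) : x.coeff.support.card = 1 := by
  have h1 : (AddMonoidHom.id ℤ '' (1 : R[ℤ]).coeff.support).Subsingleton :=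
    ((Set.subsingleton_singleton (a := (0 : ℤ))).anti (by
      rw [one_def, coeff_single, ← Finset.coe_singleton]
      exact Finset.coe_subset.mpr Finsupp.support_single_subset)).image _
  have hsub := subsingleton_image_support_of_dvd _ hx.dvd one_ne_zero h1
  rw [AddMonoidHom.coe_id, Set.image_id] at hsub
  have hne : x.coeff.support.Nonempty := by simpa using hx.ne_zero
  exact le_antisymm (Finset.card_le_one.mpr fun a ha b hb => hsub ha hb) hne.card_pos

theorem isUnit_of_card_support_eq_one {K G : Type*} [DivisionRing K] [AddGroup G] {x : K[G]}
    (hx : x.coeff.support.card = 1) : IsUnit x := by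
  obtain ⟨g, hg, hxg⟩ := Finsupp.card_support_eq_one.mp hx
  rw [← ofCoeff_coeff x, hxg, ← coeff_single, ofCoeff_coeff]
  exact ⟨⟨single g (x.coeff g), single (-g) (x.coeff g)⁻¹, by simp [hg, one_def],
    by simp [hg, one_def]⟩, rfl⟩

theorem isUnit_of_isUnit_mapDomainRingHom {K G : Type*} [DivisionRing K] [AddGroup G]
    (ψ : G →+ ℤ) {x : K[G]} (hψ : Set.InjOn ψ x.coeff.support)
    (hx : IsUnit (mapDomainRingHom K ψ x)) : IsUnit x := by
  classical
  have := card_support_eq_one_of_isUnit hx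
  rw [mapDomainRingHom_apply, coeff_mapDomain, Finsupp.mapDomain_support_of_injOn _ hψ,
    Finset.card_image_of_injOn hψ] at this
  exact isUnit_of_card_support_eq_one this

end AddMonoidAlgebra

namespace Module

variable {R M : Type*} [CommRing R] [AddCommGroup M] [Module R M] [Projective R M]

theorem exists_dual_apply_ne_zero_and_apply_ne_zero {a b : M} (ha : a ≠ 0) (hb : b ≠ 0) :
    ∃ ψ : Dual R M, ψ a ≠ 0 ∧ ψ b ≠ 0 := by
  obtain ⟨χ₁, hχ₁⟩ := Projective.exists_dual_ne_zero R ha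
  obtain ⟨χ₂, hχ₂⟩ := Projective.exists_dual_ne_zero R hb
  by_cases h₁ : χ₁ b = 0
  · by_cases h₂ : χ₂ a = 0
    · exact ⟨χ₁ + χ₂, by simpa [h₂] using hχ₁, by simpa [h₁] using hχ₂⟩
    · exact ⟨χ₂, h₂, hχ₂⟩
  · exact ⟨χ₁, hχ₁, h₁⟩

theorem injOn_of_subsingleton_image_of_apply_eq_zero [IsDomain R] {a : M} {S : Set M}
    (hS : ∀ φ : Dual R M, φ a = 0 → (φ '' S).Subsingleton) (ψ : Dual R M) (hψ : ψ a ≠ 0) :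
    S.InjOn ψ := by
  intro g hg g' hg' hψg
  rw [← sub_eq_zero, ← forall_dual_apply_eq_zero_iff R]
  intro χ
  have hχ := hS (ψ a • χ - χ a • ψ) (by simp [mul_comm])
    (Set.mem_image_of_mem _ hg) (Set.mem_image_of_mem _ hg')
  simp only [LinearMap.sub_apply, LinearMap.smul_apply, smul_eq_mul, hψg] at hχ
  have : ψ a * (χ g - χ g') = 0 := by linear_combination hχ
  simpa [hψ, sub_eq_zero] using this

end Module

section Substitution

variable {F : Type*} [AddCommGroup F]

theorem substElt_ne_zero [Module.IsTorsionFree ℤ F] {a : F} (ha : a ≠ 0)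
    {p : LaurentPolynomial ℚ} (hp : p ≠ 0) : substElt a p ≠ 0 := fun h =>
  hp <| coeff_eq_zero.mp <| Finsupp.mapDomain_injective (smul_left_injective ℤ ha) <|
    (ofCoeff_eq_zero.mp h).trans Finsupp.mapDomain_zero.symm

theorem subsingleton_image_support_substElt (φ : F →+ ℤ) {a : F} (hφ : φ a = 0)
    (p : LaurentPolynomial ℚ) : (φ '' (substElt a p).coeff.support).Subsingleton := by
  classical
  refine (Set.subsingleton_singleton (a := (0 : ℤ))).anti ?_
  rintro _ ⟨g, hg, rfl⟩
  rw [Finset.mem_coe, substElt, ofFG, coeff_ofCoeff] at hg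
  obtain ⟨z, -, rfl⟩ := Finset.mem_image.mp (Finsupp.mapDomain_support hg)
  simp [hφ]

theorem mapDomainRingHom_substElt (ψ : F →+ ℤ) (a : F) (p : LaurentPolynomial ℚ) :
    mapDomainRingHom ℚ ψ (substElt a p) = substPow (ψ a) p := by
  apply coeff_injective
  rw [mapDomainRingHom_apply, coeff_mapDomain, substElt, substPow, ofFG, coeff_ofCoeff,
    coeff_ofCoeff, ← Finsupp.mapDomain_comp]
  congr 1
  funext z
  simp [mul_comm]

end Substitution

theorem stmt12_general {F : Type*} [AddCommGroup F] [Module.Free ℤ F]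
    (p q : LaurentPolynomial ℚ) (hp : p ≠ 0)
    (hcop : ∀ n k : ℤ, n ≠ 0 → k ≠ 0 → IsCoprime (substPow n p) (substPow k q))
    (a b : F) (ha : a ≠ 0) (hb : b ≠ 0) :
    ∀ d : AddMonoidAlgebra ℚ F, d ∣ substElt a p → d ∣ substElt b q → IsUnit d := by
  intro d hdp hdq
  obtain ⟨ψ, hψa, hψb⟩ := Module.exists_dual_apply_ne_zero_and_apply_ne_zero (R := ℤ) ha hb
  have hline (φ : Module.Dual ℤ F) (hφ : φ a = 0) : (φ '' d.coeff.support).Subsingleton :=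
    subsingleton_image_support_of_dvd φ.toAddMonoidHom hdp (substElt_ne_zero ha hp)
      (subsingleton_image_support_substElt φ.toAddMonoidHom hφ p)
  refine isUnit_of_isUnit_mapDomainRingHom ψ.toAddMonoidHom
    (Module.injOn_of_subsingleton_image_of_apply_eq_zero hline ψ hψa) ?_
  refine (hcop _ _ hψa hψb).isUnit_of_dvd' ?_ ?_
  · exact mapDomainRingHom_substElt ψ.toAddMonoidHom a p ▸ map_dvd _ hdp
  · exact mapDomainRingHom_substElt ψ.toAddMonoidHom b q ▸ map_dvd _ hdq

/-- Let `F` be a finitely generated free abelian group and `p, q ∈ ℚ[t,t⁻¹]` nonzero and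
strongly coprime.  Then for any nontrivial `a, b ∈ F`, the elements `p(a)` and `q(b)` of
the group algebra `ℚF` are relatively prime: any common divisor is a unit. -/
theorem stmt12 {F : Type*} [AddCommGroup F] [Module.Free ℤ F] [Module.Finite ℤ F]
    (p q : LaurentPolynomial ℚ) (hp : p ≠ 0) (hq : q ≠ 0)
    (hcop : ∀ n k : ℤ, n ≠ 0 → k ≠ 0 → IsCoprime (substPow n p) (substPow k q))
    (a b : F) (ha : a ≠ 0) (hb : b ≠ 0) :
    ∀ d : AddMonoidAlgebra ℚ F, d ∣ substElt a p → d ∣ substElt b q → IsUnit d :=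
  stmt12_general p q hp hcop a b ha hb
end

section
/- Let m ≥ 1 and let t* : ℚ² → ℚ² be the linear automorphism given by (1/m²)·M where M = [[m²+1, m],[m, m²]]. Let e₁ = (1,0) and e₂ = (0,1). Then for every integer k, (t*)^k(span{e₂}) ∩ span{e₁} = {0}. -/
noncomputable def Nmat (m : ℕ) : Matrix (Fin 2) (Fin 2) ℚ := ((m : ℚ) ^ 2)⁻¹ • Mmat m

def Amat (m : ℕ) : Matrix (Fin 2) (Fin 2) ℚ :=
  !![(m : ℚ) ^ 2, -(m : ℚ); -(m : ℚ), (m : ℚ) ^ 2 + 1]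

noncomputable def Pmat (m : ℕ) : Matrix (Fin 2) (Fin 2) ℚ := ((m : ℚ) ^ 2)⁻¹ • Amat m

lemma NP (m : ℕ) (hm : 0 < m) : Nmat m * Pmat m = 1 := by
  have hm' : ((m:ℚ)^2) ≠ 0 := by positivity
  ext i j
  fin_cases i <;> fin_cases j <;>
    simp [Nmat, Pmat, Mmat, Amat, Matrix.mul_apply, Fin.sum_univ_two, Matrix.one_apply] <;>
    field_simp <;> ring

lemma PN (m : ℕ) (hm : 0 < m) : Pmat m * Nmat m = 1 := by
  have hm' : ((m:ℚ)^2) ≠ 0 := by positivity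
  ext i j
  fin_cases i <;> fin_cases j <;>
    simp [Nmat, Pmat, Mmat, Amat, Matrix.mul_apply, Fin.sum_univ_two, Matrix.one_apply] <;>
    field_simp <;> ring

lemma powM_pos (m : ℕ) (hm : 0 < m) (n : ℕ) :
    0 < (Mmat m ^ n) 0 0 ∧ 0 < (Mmat m ^ n) 1 1 ∧
      0 ≤ (Mmat m ^ n) 0 1 ∧ 0 ≤ (Mmat m ^ n) 1 0 := by
  have hm' : (0:ℚ) < m := by exact_mod_cast hm
  induction n with
  | zero => simp [Matrix.one_apply]
  | succ n ih =>
    obtain ⟨h00, h11, h01, h10⟩ := ih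
    have e00 : Mmat m 0 0 = (m:ℚ)^2 + 1 := by simp [Mmat]
    have e01 : Mmat m 0 1 = (m:ℚ) := by simp [Mmat]
    have e10 : Mmat m 1 0 = (m:ℚ) := by simp [Mmat]
    have e11 : Mmat m 1 1 = (m:ℚ)^2 := by simp [Mmat]
    rw [pow_succ]
    refine ⟨?_, ?_, ?_, ?_⟩ <;>
        simp only [Matrix.mul_apply, Fin.sum_univ_two, e00, e01, e10, e11]
    · nlinarith [mul_nonneg h01 hm'.le, mul_pos h00 (mul_pos hm' hm')]
    · nlinarith [mul_nonneg h10 hm'.le, mul_pos h11 (mul_pos hm' hm')]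
    · nlinarith [mul_nonneg h00.le hm'.le, mul_nonneg (mul_nonneg h01 hm'.le) hm'.le]
    · nlinarith [mul_nonneg (mul_nonneg h10 hm'.le) hm'.le, mul_nonneg h11.le hm'.le, h10]

lemma powA_pos (m : ℕ) (hm : 0 < m) (n : ℕ) :
    0 < (Amat m ^ n) 0 0 ∧ 0 < (Amat m ^ n) 1 1 ∧
      (Amat m ^ n) 0 1 ≤ 0 ∧ (Amat m ^ n) 1 0 ≤ 0 := by
  have hm' : (0:ℚ) < m := by exact_mod_cast hm
  induction n with
  | zero => simp [Matrix.one_apply]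
  | succ n ih =>
    obtain ⟨h00, h11, h01, h10⟩ := ih
    have e00 : Amat m 0 0 = (m:ℚ)^2 := by simp [Amat]
    have e01 : Amat m 0 1 = -(m:ℚ) := by simp [Amat]
    have e10 : Amat m 1 0 = -(m:ℚ) := by simp [Amat]
    have e11 : Amat m 1 1 = (m:ℚ)^2 + 1 := by simp [Amat]
    rw [pow_succ]
    refine ⟨?_, ?_, ?_, ?_⟩ <;>
        simp only [Matrix.mul_apply, Fin.sum_univ_two, e00, e01, e10, e11]
    · nlinarith [mul_pos h00 (mul_pos hm' hm'), mul_nonneg (neg_nonneg.mpr h01) hm'.le]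
    · nlinarith [mul_nonneg (neg_nonneg.mpr h10) hm'.le, mul_pos h11 (mul_pos hm' hm'), h11]
    · nlinarith [mul_nonneg h00.le hm'.le,
        mul_nonneg (neg_nonneg.mpr h01) (mul_pos hm' hm').le, h01]
    · nlinarith [mul_nonneg (neg_nonneg.mpr h10) (mul_pos hm' hm').le, mul_nonneg h11.le hm'.le]

lemma zpow_entry_pos (m : ℕ) (hm : 0 < m) (k : ℤ) : 0 < (Nmat m ^ k) 1 1 := by
  have hm' : (0:ℚ) < m := by exact_mod_cast hm
  have hc : (0:ℚ) < ((m:ℚ)^2)⁻¹ := by positivity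
  cases k with
  | ofNat n =>
    rw [Int.ofNat_eq_coe, zpow_natCast, Nmat, smul_pow]
    have := (powM_pos m hm n).2.1
    simpa [Matrix.smul_apply] using mul_pos (pow_pos hc n) this
  | negSucc n =>
    rw [zpow_negSucc]
    have hcom : Commute (Pmat m) (Nmat m) := by
      unfold Commute SemiconjBy
      rw [PN m hm, NP m hm]
    have hinv : (Nmat m ^ (n + 1))⁻¹ = Pmat m ^ (n + 1) := by
      apply Matrix.inv_eq_left_inv
      rw [← hcom.mul_pow, PN m hm, one_pow]
    rw [hinv, Pmat, smul_pow]
    have := (powA_pos m hm (n + 1)).2.1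
    simpa [Matrix.smul_apply] using mul_pos (pow_pos hc (n + 1)) this

/-- For every integer `k`, `(t*)^k (span{e₂}) ∩ span{e₁} = {0}`. -/
theorem stmt14 (m : ℕ) (hm : 0 < m) (k : ℤ) (v : Fin 2 → ℚ)
    (h₂ : ∃ y : ℚ, v = (Nmat m ^ k).mulVec ![0, y])
    (h₁ : ∃ x : ℚ, v = ![x, 0]) : v = 0 := by
  obtain ⟨y, hy⟩ := h₂
  obtain ⟨x, hx⟩ := h₁
  have h1 : v 1 = 0 := by rw [hx]; rfl
  have h2 : v 1 = (Nmat m ^ k) 1 1 * y := by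
    rw [hy]; simp [Matrix.mulVec, dotProduct, Fin.sum_univ_two]
  have hpos := zpow_entry_pos m hm k
  have hy0 : y = 0 := by
    rcases mul_eq_zero.mp (h2 ▸ h1) with h | h
    · exact absurd h (ne_of_gt hpos)
    · exact h
  subst hy0
  rw [hy]
  have : (![0, (0:ℚ)] : Fin 2 → ℚ) = 0 := by ext i; fin_cases i <;> rfl
  rw [this, Matrix.mulVec_zero]
end
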